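/- Let (H, η) be an extended strip decomposition of a graph G, let Q be an induced path in G between two distinct peripheral vertices, and let pq be an edge of H with full edge particle A = A_{pq}^{pq}. If V(Q) ∩ η(pq) = ∅, then |V(Q) ∩ N[A]| ≤ 4. -/

import Mathlib

/-- Closed neighborhood of a set `S` in a graph `G`. -/
def closedNbhd {V : Type*} (G : SimpleGraph V) (S : Set V) : Set V :=
  S ∪ {v | ∃ s ∈ S, G.Adj s v}

/-- Open neighborhood of a set `S` in a graph `G`. -/
def openNbhd {V : Type*} (G : SimpleGraph V) (S : Set V) : Set V :=
  {v | v ∉ S ∧ ∃ s ∈ S, G.Adj s v}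

/-- Reachability inside the induced subgraph of `G` on the vertex set `T`. -/
def ReachIn {V : Type*} (G : SimpleGraph V) (T : Set V) : V → V → Prop :=
  Relation.ReflTransGen (fun a b => G.Adj a b ∧ a ∈ T ∧ b ∈ T)

/-- Total weight of a vertex set. -/
noncomputable def wsum {V : Type*} [Fintype V] (w : V → ℕ) (S : Set V) : ℕ :=
  ∑ v ∈ S.toFinite.toFinset, w v

/-- `l` is the vertex sequence of an induced path of `G`:
nonempty, no repetitions, and two vertices of `l` are adjacent in `G`
iff they are consecutive in `l`. -/
def IsInducedPathList {V : Type*} (G : SimpleGraph V) (l : List V) : Prop :=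
  l ≠ [] ∧ l.Nodup ∧
  ∀ (i j : ℕ) (hi : i < l.length) (hj : j < l.length),
    G.Adj (l.get ⟨i, hi⟩) (l.get ⟨j, hj⟩) ↔ (i + 1 = j ∨ j + 1 = i)

/-- Every connected component of the induced subgraph of `G` on `T`
has `w`-weight at most `b`. -/
def CompsSmall {V : Type*} [Fintype V] (G : SimpleGraph V) (w : V → ℕ)
    (T : Set V) (b : ℕ) : Prop :=
  ∀ v ∈ T, wsum w {u | ReachIn G T v u} ≤ b

/-- `x`, `y`, `z` form a triangle in `H`. -/
def Tri {H' : Type*} (H : SimpleGraph H') (x y z : H') : Prop :=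
  H.Adj x y ∧ H.Adj y z ∧ H.Adj x z

/-- An extended strip decomposition `(H, η)` of a graph `G`.
`ηv x` is `η(x)`, `ηe x y` is `η(xy)`, `ηi x y` is the interface `η(xy, x)`,
and `ηt x y z` is `η(xyz)`. -/
structure ESD {V : Type*} {H' : Type*} (G : SimpleGraph V) (H : SimpleGraph H') where
  ηv : H' → Set V
  ηe : H' → H' → Set V
  ηi : H' → H' → Set V
  ηt : H' → H' → H' → Set V
  ηe_symm : ∀ x y, ηe x y = ηe y x
  ηt_symm12 : ∀ x y z, ηt x y z = ηt y x z
  ηt_symm23 : ∀ x y z, ηt x y z = ηt x z y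
  ηe_empty : ∀ x y, ¬ H.Adj x y → ηe x y = ∅
  ηt_empty : ∀ x y z, ¬ Tri H x y z → ηt x y z = ∅
  ηi_sub : ∀ x y, ηi x y ⊆ ηe x y
  cover : ∀ v : V, (∃ x, v ∈ ηv x) ∨ (∃ x y, v ∈ ηe x y) ∨ (∃ x y z, v ∈ ηt x y z)
  disj_vv : ∀ x y, x ≠ y → ηv x ∩ ηv y = ∅
  disj_ve : ∀ x y z, ηv x ∩ ηe y z = ∅
  disj_vt : ∀ x a b c, ηv x ∩ ηt a b c = ∅
  disj_ee : ∀ x y a b, ¬ (x = a ∧ y = b) → ¬ (x = b ∧ y = a) → ηe x y ∩ ηe a b = ∅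
  disj_et : ∀ x y a b c, ηe x y ∩ ηt a b c = ∅
  disj_tt : ∀ a b c d e f, ({a, b, c} : Set H') ≠ ({d, e, f} : Set H') →
    ηt a b c ∩ ηt d e f = ∅
  complete : ∀ x y z, H.Adj x y → H.Adj x z → y ≠ z →
    ∀ u ∈ ηi x y, ∀ v ∈ ηi x z, G.Adj u v
  edge_cond : ∀ u v : V, G.Adj u v →
    (∃ x, u ∈ ηv x ∧ v ∈ ηv x) ∨
    (∃ x y, u ∈ ηe x y ∧ v ∈ ηe x y) ∨
    (∃ x y z, u ∈ ηt x y z ∧ v ∈ ηt x y z) ∨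
    (∃ x y z, H.Adj x y ∧ H.Adj x z ∧ y ≠ z ∧
      ((u ∈ ηi x y ∧ v ∈ ηi x z) ∨ (v ∈ ηi x y ∧ u ∈ ηi x z))) ∨
    (∃ x y, H.Adj x y ∧ ((u ∈ ηi x y ∧ v ∈ ηv x) ∨ (v ∈ ηi x y ∧ u ∈ ηv x))) ∨
    (∃ x y z, Tri H x y z ∧
      ((u ∈ ηt x y z ∧ v ∈ ηi x y ∩ ηi y x) ∨ (v ∈ ηt x y z ∧ u ∈ ηi x y ∩ ηi y x)))

namespace ESD

variable {V : Type*} {H' : Type*} {G : SimpleGraph V} {H : SimpleGraph H'}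

/-- A rigid extended strip decomposition: every edge of `H` has nonempty interfaces
and every isolated vertex `x` of `H` has `η(x) ≠ ∅`. -/
def IsRigid (D : ESD G H) : Prop :=
  (∀ x y, H.Adj x y → (D.ηi x y).Nonempty) ∧
  (∀ x, (∀ y, ¬ H.Adj x y) → (D.ηv x).Nonempty)

/-- A vertex `z` of `G` is peripheral in `(H, η)`. -/
def Peripheral (D : ESD G H) (z : V) : Prop :=
  ∃ x y, H.Adj x y ∧ (∀ u, H.Adj x u → u = y) ∧ D.ηi x y = {z} ∧ D.ηv x = ∅

/-- The full edge particle `A_{pq}^{pq}`. -/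
def fullEdge (D : ESD G H) (p q : H') : Set V :=
  D.ηv p ∪ D.ηv q ∪ D.ηe p q ∪ {v | ∃ r, v ∈ D.ηt p q r}

/-- Every particle of `D` has `w`-weight at most `b`. -/
def ParticlesSmall [Fintype V] (D : ESD G H) (w : V → ℕ) (b : ℕ) : Prop :=
  (∀ x, wsum w (D.ηv x) ≤ b) ∧
  (∀ x y, H.Adj x y → wsum w (D.ηe x y \ (D.ηi x y ∪ D.ηi y x)) ≤ b) ∧
  (∀ x y, H.Adj x y → wsum w (D.ηv x ∪ (D.ηe x y \ D.ηi y x)) ≤ b) ∧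
  (∀ x y, H.Adj x y → wsum w (D.fullEdge x y) ≤ b) ∧
  (∀ x y z, Tri H x y z → wsum w (D.ηt x y z) ≤ b)

end ESD

/-- The subdivided claw `S_{t,t,t}`: a center vertex and three arms of length `t`. -/
def StttRel (t : ℕ) : (Unit ⊕ Fin 3 × Fin t) → (Unit ⊕ Fin 3 × Fin t) → Prop
  | Sum.inl _, Sum.inr p => p.2.val = 0
  | Sum.inr p, Sum.inr q => p.1 = q.1 ∧ p.2.val + 1 = q.2.val
  | _, _ => False

def Sttt (t : ℕ) : SimpleGraph (Unit ⊕ Fin 3 × Fin t) :=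
  SimpleGraph.fromRel (StttRel t)

/-!
Write `A = A_{pq}^{pq}`. Every neighbour of `A` outside `A` lies in an interface at `p` or at `q`,
so it suffices that `Q` avoids `A` and meets the interfaces at any vertex of `H` in at most two
vertices.

Both rest on one fact: no interface `η(xy, x)` contains two non-consecutive vertices `u`, `v` of
`Q`. Otherwise, walking along `Q` from `u` and from `v` towards its ends, `Q` leaves `A_{xy}^{xy}`
on both sides. An exit at `x` would be adjacent to both `u` and `v`, so both exits lie in
interfaces at `y`; these are either complete to each other or equal, and in the latter case the new
pair is strictly closer to the ends of `Q`, so we descend. If instead an end of `Q` lies in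
`A_{xy}^{xy}`, peripherality makes `y` a leaf with `η(xy, y)` that single end; then `Q` cannot
leave `A_{xy}^{xy}` beyond `u` and `v` at all, and both ends of `Q` are the vertex of `η(xy, y)`.

As interfaces at a common vertex are complete to each other, `Q` meets them in at most two
consecutive vertices. A set `η(c)` is left only through interfaces at `c`, and `η(abc)` only
through interfaces at two of `a`, `b`, `c`; so a visit of `Q` to either would produce two
non-consecutive vertices of `Q` in interfaces at a common vertex.
-/

namespace ESD

variable {V H' : Type*} {G : SimpleGraph V} {H : SimpleGraph H'} {D : ESD G H}
  {a b c d e f t x y : H'} {u w w' z : V}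

def MemInterfaceAt (D : ESD G H) (c : H') (u : V) : Prop :=
  ∃ d, u ∈ D.ηi c d

theorem notMem_ηe_of_mem_ηv (h : u ∈ D.ηv x) : u ∉ D.ηe a b := fun h' =>
  Set.eq_empty_iff_forall_notMem.1 (D.disj_ve x a b) u ⟨h, h'⟩

theorem notMem_ηt_of_mem_ηv (h : u ∈ D.ηv x) : u ∉ D.ηt a b c := fun h' =>
  Set.eq_empty_iff_forall_notMem.1 (D.disj_vt x a b c) u ⟨h, h'⟩

theorem notMem_ηt_of_mem_ηe (h : u ∈ D.ηe x y) : u ∉ D.ηt a b c := fun h' =>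
  Set.eq_empty_iff_forall_notMem.1 (D.disj_et x y a b c) u ⟨h, h'⟩

theorem eq_of_mem_ηv (h : u ∈ D.ηv x) (h' : u ∈ D.ηv y) : x = y := by
  by_contra hxy
  exact Set.eq_empty_iff_forall_notMem.1 (D.disj_vv x y hxy) u ⟨h, h'⟩

theorem eq_and_eq_or_eq_and_eq_of_mem_ηe (h : u ∈ D.ηe x y) (h' : u ∈ D.ηe a b) :
    (x = a ∧ y = b) ∨ (x = b ∧ y = a) := by
  by_contra! hne
  exact Set.eq_empty_iff_forall_notMem.1
    (D.disj_ee x y a b (fun h => hne.1 h.1 h.2) (fun h => hne.2 h.1 h.2)) u ⟨h, h'⟩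

theorem ηe_eq_of_mem (h : u ∈ D.ηe x y) (h' : u ∈ D.ηe a b) : D.ηe x y = D.ηe a b := by
  rcases eq_and_eq_or_eq_and_eq_of_mem_ηe h h' with ⟨rfl, rfl⟩ | ⟨rfl, rfl⟩
  exacts [rfl, D.ηe_symm _ _]

theorem adj_of_mem_ηe (h : u ∈ D.ηe x y) : H.Adj x y := by
  by_contra hxy
  rw [D.ηe_empty x y hxy] at h
  exact h

theorem adj_of_mem_ηi (h : u ∈ D.ηi x y) : H.Adj x y :=
  adj_of_mem_ηe (D.ηi_sub x y h)

theorem notMem_ηi_of_mem_ηv (h : u ∈ D.ηv x) : u ∉ D.ηi a b := fun h' =>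
  notMem_ηe_of_mem_ηv h (D.ηi_sub a b h')

theorem notMem_ηi_of_mem_ηt (h : u ∈ D.ηt a b c) : u ∉ D.ηi x y := fun h' =>
  notMem_ηt_of_mem_ηe (D.ηi_sub x y h') h

theorem tri_of_mem_ηt (h : u ∈ D.ηt a b c) : Tri H a b c := by
  by_contra habc
  rw [D.ηt_empty a b c habc] at h
  exact h

theorem adj_of_mem_ηi_of_ne (hu : u ∈ D.ηi x a) (hw : w ∈ D.ηi x b) (hab : a ≠ b) :
    G.Adj u w :=
  D.complete x a b (adj_of_mem_ηi hu) (adj_of_mem_ηi hw) hab u hu w hw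

theorem eq_or_eq_or_eq_of_mem_ηt (h : u ∈ D.ηt a b c) (h' : u ∈ D.ηt d e f)
    (ht : t ∈ ({d, e, f} : Set H')) : t = a ∨ t = b ∨ t = c := by
  have hset : ({a, b, c} : Set H') = {d, e, f} := by
    by_contra hne
    exact Set.eq_empty_iff_forall_notMem.1 (D.disj_tt a b c d e f hne) u ⟨h, h'⟩
  rw [← hset] at ht
  simpa using ht

theorem ηt_eq_of_mem (h : u ∈ D.ηt a b c) (h' : u ∈ D.ηt d e f) :
    D.ηt a b c = D.ηt d e f := by
  obtain ⟨hde, hef, hdf⟩ := tri_of_mem_ηt h'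
  have mem := fun t (ht : t ∈ ({d, e, f} : Set H')) => eq_or_eq_or_eq_of_mem_ηt h h' ht
  rcases mem d (by simp) with rfl | rfl | rfl <;> rcases mem e (by simp) with rfl | rfl | rfl <;>
    rcases mem f (by simp) with rfl | rfl | rfl <;>
    first
    | exact (H.irrefl hde).elim
    | exact (H.irrefl hef).elim
    | exact (H.irrefl hdf).elim
    | rfl
    | exact D.ηt_symm12 _ _ _
    | exact D.ηt_symm23 _ _ _
    | exact (D.ηt_symm12 _ _ _).trans (D.ηt_symm23 _ _ _)
    | exact (D.ηt_symm23 _ _ _).trans (D.ηt_symm12 _ _ _)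
    | exact ((D.ηt_symm12 _ _ _).trans (D.ηt_symm23 _ _ _)).trans (D.ηt_symm12 _ _ _)

theorem mem_fullEdge_iff :
    u ∈ D.fullEdge x y ↔ u ∈ D.ηv x ∨ u ∈ D.ηv y ∨ u ∈ D.ηe x y ∨ ∃ r, u ∈ D.ηt x y r := by
  simp [fullEdge, or_assoc]

theorem ηe_subset_fullEdge : D.ηe x y ⊆ D.fullEdge x y := fun _ h =>
  mem_fullEdge_iff.2 (Or.inr (Or.inr (Or.inl h)))

theorem memInterfaceAt_of_mem_openNbhd_ηv (h : w' ∈ openNbhd G (D.ηv c)) :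
    D.MemInterfaceAt c w' := by
  obtain ⟨hw', w, hw, hadj⟩ := h
  rcases D.edge_cond w w' hadj with ⟨x, h1, h2⟩ | ⟨x, y, h1, -⟩ | ⟨x, y, z, h1, -⟩ |
      ⟨x, y, z, -, -, -, ⟨h1, -⟩ | ⟨-, h1⟩⟩ | ⟨x, y, -, ⟨h1, -⟩ | ⟨h1, h2⟩⟩ |
      ⟨x, y, z, -, ⟨h1, -⟩ | ⟨-, h1, -⟩⟩
  · exact absurd (eq_of_mem_ηv h1 hw ▸ h2) hw'
  · exact absurd h1 (notMem_ηe_of_mem_ηv hw)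
  · exact absurd h1 (notMem_ηt_of_mem_ηv hw)
  · exact absurd h1 (notMem_ηi_of_mem_ηv hw)
  · exact absurd h1 (notMem_ηi_of_mem_ηv hw)
  · exact absurd h1 (notMem_ηi_of_mem_ηv hw)
  · exact ⟨y, eq_of_mem_ηv h2 hw ▸ h1⟩
  · exact absurd h1 (notMem_ηt_of_mem_ηv hw)
  · exact absurd h1 (notMem_ηi_of_mem_ηv hw)

theorem memInterfaceAt_of_mem_openNbhd_ηt (h : w' ∈ openNbhd G (D.ηt a b c)) :
    (D.MemInterfaceAt a w' ∧ D.MemInterfaceAt b w') ∨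
      (D.MemInterfaceAt b w' ∧ D.MemInterfaceAt c w') ∨
      (D.MemInterfaceAt a w' ∧ D.MemInterfaceAt c w') := by
  obtain ⟨hw', w, hw, hadj⟩ := h
  rcases D.edge_cond w w' hadj with ⟨x, h1, -⟩ | ⟨x, y, h1, -⟩ | ⟨x, y, z, h1, h2⟩ |
      ⟨x, y, z, -, -, -, ⟨h1, -⟩ | ⟨-, h1⟩⟩ | ⟨x, y, -, ⟨h1, -⟩ | ⟨-, h1⟩⟩ |
      ⟨x, y, z, hxyz, ⟨h1, h2, h3⟩ | ⟨-, h1, -⟩⟩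
  · exact absurd hw (notMem_ηt_of_mem_ηv h1)
  · exact absurd hw (notMem_ηt_of_mem_ηe h1)
  · exact absurd (ηt_eq_of_mem h1 hw ▸ h2) hw'
  · exact absurd h1 (notMem_ηi_of_mem_ηt hw)
  · exact absurd h1 (notMem_ηi_of_mem_ηt hw)
  · exact absurd h1 (notMem_ηi_of_mem_ηt hw)
  · exact absurd hw (notMem_ηt_of_mem_ηv h1)
  · have hx : D.MemInterfaceAt x w' := ⟨y, h2⟩
    have hy : D.MemInterfaceAt y w' := ⟨x, h3⟩
    have hxy : x ≠ y := hxyz.1.ne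
    rcases eq_or_eq_or_eq_of_mem_ηt hw h1 (by simp : x ∈ ({x, y, z} : Set H')) with
      rfl | rfl | rfl <;>
    rcases eq_or_eq_or_eq_of_mem_ηt hw h1 (by simp : y ∈ ({x, y, z} : Set H')) with
      rfl | rfl | rfl <;>
    tauto
  · exact absurd h1 (notMem_ηi_of_mem_ηt hw)

theorem eq_or_eq_of_mem_ηi_of_mem_ηe (hw : w ∈ D.ηe x y) (h : w ∈ D.ηi c d) :
    c = x ∨ c = y := by
  rcases eq_and_eq_or_eq_and_eq_of_mem_ηe hw (D.ηi_sub c d h) with ⟨rfl, -⟩ | ⟨-, rfl⟩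
  exacts [Or.inl rfl, Or.inr rfl]

theorem memInterfaceAt_or_mem_fullEdge_of_adj (hadj : G.Adj w w') (hw : w ∈ D.ηe x y) :
    D.MemInterfaceAt x w' ∨ D.MemInterfaceAt y w' ∨ w' ∈ D.fullEdge x y := by
  rcases D.edge_cond w w' hadj with ⟨c, h1, -⟩ | ⟨c, d, h1, h2⟩ | ⟨c, d, e, h1, -⟩ |
      ⟨c, d, e, -, -, -, ⟨h1, h2⟩ | ⟨h2, h1⟩⟩ | ⟨c, d, -, ⟨h1, h2⟩ | ⟨-, h1⟩⟩ |
      ⟨c, d, e, -, ⟨h1, -⟩ | ⟨h2, h1, -⟩⟩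
  · exact absurd hw (notMem_ηe_of_mem_ηv h1)
  · exact Or.inr (Or.inr (ηe_subset_fullEdge (ηe_eq_of_mem h1 hw ▸ h2)))
  · exact absurd h1 (notMem_ηt_of_mem_ηe hw)
  · rcases eq_or_eq_of_mem_ηi_of_mem_ηe hw h1 with rfl | rfl
    exacts [Or.inl ⟨e, h2⟩, Or.inr (Or.inl ⟨e, h2⟩)]
  · rcases eq_or_eq_of_mem_ηi_of_mem_ηe hw h1 with rfl | rfl
    exacts [Or.inl ⟨d, h2⟩, Or.inr (Or.inl ⟨d, h2⟩)]
  · rcases eq_and_eq_or_eq_and_eq_of_mem_ηe hw (D.ηi_sub c d h1) with ⟨rfl, rfl⟩ | ⟨rfl, rfl⟩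
    exacts [Or.inr (Or.inr (mem_fullEdge_iff.2 (Or.inl h2))),
      Or.inr (Or.inr (mem_fullEdge_iff.2 (Or.inr (Or.inl h2))))]
  · exact absurd hw (notMem_ηe_of_mem_ηv h1)
  · exact absurd h1 (notMem_ηt_of_mem_ηe hw)
  · refine Or.inr (Or.inr (mem_fullEdge_iff.2 (Or.inr (Or.inr (Or.inr ⟨e, ?_⟩)))))
    rcases eq_and_eq_or_eq_and_eq_of_mem_ηe hw (D.ηi_sub c d h1) with ⟨rfl, rfl⟩ | ⟨rfl, rfl⟩
    exacts [h2, D.ηt_symm12 _ _ _ ▸ h2]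

theorem memInterfaceAt_of_mem_openNbhd_fullEdge (h : w' ∈ openNbhd G (D.fullEdge x y)) :
    D.MemInterfaceAt x w' ∨ D.MemInterfaceAt y w' := by
  obtain ⟨hw', w, hw, hadj⟩ := h
  rcases mem_fullEdge_iff.1 hw with hw | hw | hw | ⟨r, hw⟩
  · exact Or.inl (memInterfaceAt_of_mem_openNbhd_ηv
      ⟨fun h => hw' (mem_fullEdge_iff.2 (Or.inl h)), w, hw, hadj⟩)
  · exact Or.inr (memInterfaceAt_of_mem_openNbhd_ηv
      ⟨fun h => hw' (mem_fullEdge_iff.2 (Or.inr (Or.inl h))), w, hw, hadj⟩)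
  · exact (memInterfaceAt_or_mem_fullEdge_of_adj hadj hw).imp_right (·.resolve_right hw')
  · have := memInterfaceAt_of_mem_openNbhd_ηt
      ⟨fun h => hw' (mem_fullEdge_iff.2 (Or.inr (Or.inr (Or.inr ⟨r, h⟩)))), w, hw, hadj⟩
    tauto

theorem adj_or_exists_mem_ηi_of_mem_openNbhd_fullEdge (hw : w ∈ openNbhd G (D.fullEdge x y))
    (hu : u ∈ D.ηi x y) : G.Adj w u ∨ ∃ t, t ≠ x ∧ w ∈ D.ηi y t := by
  rcases memInterfaceAt_of_mem_openNbhd_fullEdge hw with ⟨t, ht⟩ | ⟨t, ht⟩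
  · refine Or.inl (adj_of_mem_ηi_of_ne ht hu ?_)
    rintro rfl
    exact hw.1 (ηe_subset_fullEdge (D.ηi_sub x t ht))
  · refine Or.inr ⟨t, ?_, ht⟩
    rintro rfl
    exact hw.1 (ηe_subset_fullEdge (D.ηe_symm y t ▸ D.ηi_sub y t ht))

theorem Peripheral.exists_mem_ηe (hz : D.Peripheral z) : ∃ a b, z ∈ D.ηe a b := by
  obtain ⟨a, b, -, -, hab, -⟩ := hz
  exact ⟨a, b, D.ηi_sub a b (hab ▸ rfl)⟩

theorem Peripheral.ηi_eq_singleton_or (hz : D.Peripheral z) (hzA : z ∈ D.fullEdge x y) :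
    D.ηi x y = {z} ∨ (D.ηi y x = {z} ∧ ∀ t, H.Adj y t → t = x) := by
  obtain ⟨a, b, -, hleaf, hab, -⟩ := hz
  have hze : z ∈ D.ηe a b := D.ηi_sub a b (hab ▸ rfl)
  have hzxy : z ∈ D.ηe x y := by
    rcases mem_fullEdge_iff.1 hzA with h | h | h | ⟨r, h⟩
    · exact absurd hze (notMem_ηe_of_mem_ηv h)
    · exact absurd hze (notMem_ηe_of_mem_ηv h)
    · exact h
    · exact absurd h (notMem_ηt_of_mem_ηe hze)
  rcases eq_and_eq_or_eq_and_eq_of_mem_ηe hze hzxy with ⟨rfl, rfl⟩ | ⟨rfl, rfl⟩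
  exacts [Or.inl hab, Or.inr ⟨hab, hleaf⟩]

end ESD

theorem List.exists_getElem_mem_and_succ_notMem {α : Type*} {l : List α} (S : Set α) {a b : ℕ}
    (hab : a ≤ b) (hb : b < l.length) (ha : l[a] ∈ S) (hb' : l[b] ∉ S) :
    ∃ m, ∃ (_ : a ≤ m) (_ : m < b), l[m] ∈ S ∧ l[m + 1] ∉ S := by
  induction b, hab using Nat.le_induction with
  | base => exact absurd ha hb'
  | succ b hab ih =>
    by_cases h : l[b] ∈ S
    · exact ⟨b, hab, by omega, h, hb'⟩
    · obtain ⟨m, ham, hmb, hm⟩ := ih (by omega) ha h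
      exact ⟨m, ham, by omega, hm⟩

namespace IsInducedPathList

open ESD

variable {V H' : Type*} {G : SimpleGraph V} {H : SimpleGraph H'} {D : ESD G H} {l : List V}
  {i j : ℕ} {c x y : H'}

theorem adj_iff (hl : IsInducedPathList G l) (hi : i < l.length) (hj : j < l.length) :
    G.Adj l[i] l[j] ↔ i + 1 = j ∨ j + 1 = i := by
  simpa using hl.2.2 i j hi hj

theorem getElem_inj (hl : IsInducedPathList G l) {hi : i < l.length} {hj : j < l.length}
    (h : l[i] = l[j]) : i = j :=
  hl.2.1.getElem_inj_iff.1 h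

theorem exists_lt_mem_ηi (hl : IsInducedPathList G l) (hij : i + 2 ≤ j) (hj : j < l.length)
    (hj' : l[j] ∈ D.ηi x y) (h0 : l[0] ∉ D.fullEdge x y) (hi' : l[i] ∈ D.fullEdge x y) :
    ∃ k t, ∃ (_ : k < i), t ≠ x ∧ l[k] ∈ D.ηi y t := by
  obtain ⟨m, -, hmi, hm, hm1⟩ :=
    l.exists_getElem_mem_and_succ_notMem (D.fullEdge x y)ᶜ (Nat.zero_le i) (by omega) h0
      (not_not.2 hi')
  rcases adj_or_exists_mem_ηi_of_mem_openNbhd_fullEdge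
      ⟨hm, l[m + 1], not_not.1 hm1, (hl.adj_iff _ _).2 (Or.inr rfl)⟩ hj' with hadj | ⟨t, htx, ht⟩
  · have := (hl.adj_iff _ _).1 hadj
    omega
  · exact ⟨m, t, hmi, htx, ht⟩

theorem exists_gt_mem_ηi (hl : IsInducedPathList G l) (hij : i + 2 ≤ j) (hj : j < l.length)
    (hi' : l[i] ∈ D.ηi x y) (hj' : l[j] ∈ D.fullEdge x y)
    (hn : l[l.length - 1] ∉ D.fullEdge x y) :
    ∃ k t, ∃ (_ : j < k) (_ : k < l.length), t ≠ x ∧ l[k] ∈ D.ηi y t := by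
  obtain ⟨m, hjm, hmn, hm, hm1⟩ :=
    l.exists_getElem_mem_and_succ_notMem (D.fullEdge x y) (by omega : j ≤ l.length - 1)
      (by omega) hj' hn
  rcases adj_or_exists_mem_ηi_of_mem_openNbhd_fullEdge
      ⟨hm1, l[m], hm, (hl.adj_iff _ _).2 (Or.inl rfl)⟩ hi' with hadj | ⟨t, htx, ht⟩
  · have := (hl.adj_iff _ _).1 hadj
    omega
  · exact ⟨m + 1, t, by omega, by omega, htx, ht⟩

theorem ends_mem_fullEdge_of_leaf (hl : IsInducedPathList G l) (hij : i + 2 ≤ j)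
    (hj : j < l.length) (hi' : l[i] ∈ D.ηi x y) (hj' : l[j] ∈ D.ηi x y)
    (hleaf : ∀ t, H.Adj y t → t = x) :
    l[0] ∈ D.fullEdge x y ∧ l[l.length - 1] ∈ D.fullEdge x y := by
  constructor
  · by_contra h0
    obtain ⟨k, t, _, htx, ht⟩ :=
      hl.exists_lt_mem_ηi hij hj hj' h0 (ηe_subset_fullEdge (D.ηi_sub x y hi'))
    exact htx (hleaf t (adj_of_mem_ηi ht))
  · by_contra hn
    obtain ⟨k, t, _, _, htx, ht⟩ :=
      hl.exists_gt_mem_ηi hij hj hi' (ηe_subset_fullEdge (D.ηi_sub x y hj')) hn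
    exact htx (hleaf t (adj_of_mem_ηi ht))

theorem getElem_notMem_ηi_of_add_two_le (hl : IsInducedPathList G l)
    (h0 : D.Peripheral (l.head hl.1)) (hn : D.Peripheral (l.getLast hl.1)) {x y : H'} {i j : ℕ}
    (hij : i + 2 ≤ j) (hj : j < l.length) (hi' : l[i] ∈ D.ηi x y) : l[j] ∉ D.ηi x y := by
  intro hj'
  have h0' : D.Peripheral l[0] := List.head_eq_getElem hl.1 ▸ h0
  have hn' : D.Peripheral l[l.length - 1] := List.getLast_eq_getElem hl.1 ▸ hn
  have hend : ∀ z, D.Peripheral z → z ∈ D.fullEdge x y →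
      D.ηi y x = {z} ∧ ∀ t, H.Adj y t → t = x := by
    refine fun z hz hzA => (hz.ηi_eq_singleton_or hzA).resolve_left fun h => ?_
    rw [h] at hi' hj'
    have := hl.getElem_inj (hi'.trans hj'.symm)
    omega
  by_cases hA : l[0] ∈ D.fullEdge x y ∨ l[l.length - 1] ∈ D.fullEdge x y
  · have hleaf : ∀ t, H.Adj y t → t = x := by
      rcases hA with h | h
      exacts [(hend _ h0' h).2, (hend _ hn' h).2]
    obtain ⟨hA0, hAn⟩ := hl.ends_mem_fullEdge_of_leaf hij hj hi' hj' hleaf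
    have := hl.getElem_inj (Set.singleton_eq_singleton_iff.1
      ((hend _ h0' hA0).1.symm.trans (hend _ hn' hAn).1))
    omega
  push Not at hA
  obtain ⟨k₁, t₁, hk₁, _, ht₁⟩ :=
    hl.exists_lt_mem_ηi hij hj hj' hA.1 (ηe_subset_fullEdge (D.ηi_sub x y hi'))
  obtain ⟨k₂, t₂, hk₂, hk₂', _, ht₂⟩ :=
    hl.exists_gt_mem_ηi hij hj hi' (ηe_subset_fullEdge (D.ηi_sub x y hj')) hA.2
  by_cases ht : t₁ = t₂
  · subst ht
    exact hl.getElem_notMem_ηi_of_add_two_le h0 hn (by omega) hk₂' ht₁ ht₂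
  · have := (hl.adj_iff _ _).1 (adj_of_mem_ηi_of_ne ht₁ ht₂ ht)
    omega
termination_by i + (l.length - j)

theorem le_succ_of_memInterfaceAt (hl : IsInducedPathList G l)
    (h0 : D.Peripheral (l.head hl.1)) (hn : D.Peripheral (l.getLast hl.1))
    (hi : i < l.length) (hj : j < l.length)
    (hci : D.MemInterfaceAt c l[i]) (hcj : D.MemInterfaceAt c l[j]) : j ≤ i + 1 := by
  obtain ⟨d, hd⟩ := hci
  obtain ⟨d', hd'⟩ := hcj
  by_cases hdd : d = d'
  · subst hdd
    by_contra! h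
    exact hl.getElem_notMem_ηi_of_add_two_le h0 hn (by omega) hj hd hd'
  · have := (hl.adj_iff hi hj).1 (adj_of_mem_ηi_of_ne hd hd' hdd)
    omega

theorem notMem_of_forall_mem_openNbhd (hl : IsInducedPathList G l)
    (h0 : D.Peripheral (l.head hl.1)) (hn : D.Peripheral (l.getLast hl.1)) {S : Set V}
    (hS : ∀ a b, Disjoint S (D.ηe a b))
    (hexit : ∀ w ∈ openNbhd G S, ∀ w' ∈ openNbhd G S,
      ∃ c, D.MemInterfaceAt c w ∧ D.MemInterfaceAt c w') :
    ∀ v ∈ l, v ∉ S := by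
  have hend : ∀ z, D.Peripheral z → z ∉ S := fun z hz hzS =>
    let ⟨a, b, h⟩ := hz.exists_mem_ηe
    Set.disjoint_left.1 (hS a b) hzS h
  intro v hv hvS
  obtain ⟨k, hk, rfl⟩ := List.getElem_of_mem hv
  obtain ⟨m, _, hmk, hm, hm1⟩ :=
    l.exists_getElem_mem_and_succ_notMem Sᶜ (Nat.zero_le k) hk
      (List.head_eq_getElem hl.1 ▸ hend _ h0) (not_not.2 hvS)
  obtain ⟨m', hkm', hm'n, hm', hm'1⟩ :=
    l.exists_getElem_mem_and_succ_notMem S (by omega : k ≤ l.length - 1) (by omega) hvS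
      (List.getLast_eq_getElem hl.1 ▸ hend _ hn)
  obtain ⟨c, hc, hc'⟩ :=
    hexit l[m] ⟨hm, l[m + 1], not_not.1 hm1, (hl.adj_iff _ _).2 (Or.inr rfl)⟩
      l[m' + 1] ⟨hm'1, l[m'], hm', (hl.adj_iff _ _).2 (Or.inl rfl)⟩
  have := hl.le_succ_of_memInterfaceAt h0 hn _ _ hc hc'
  omega

theorem notMem_ηv (hl : IsInducedPathList G l)
    (h0 : D.Peripheral (l.head hl.1)) (hn : D.Peripheral (l.getLast hl.1)) (c : H') :
    ∀ v ∈ l, v ∉ D.ηv c :=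
  hl.notMem_of_forall_mem_openNbhd h0 hn
    (fun a b => Set.disjoint_iff_inter_eq_empty.2 (D.disj_ve c a b))
    fun _ hw _ hw' =>
      ⟨c, memInterfaceAt_of_mem_openNbhd_ηv hw, memInterfaceAt_of_mem_openNbhd_ηv hw'⟩

theorem notMem_ηt (hl : IsInducedPathList G l)
    (h0 : D.Peripheral (l.head hl.1)) (hn : D.Peripheral (l.getLast hl.1)) (a b c : H') :
    ∀ v ∈ l, v ∉ D.ηt a b c := by
  refine hl.notMem_of_forall_mem_openNbhd h0 hn
    (fun x y => (Set.disjoint_iff_inter_eq_empty.2 (D.disj_et x y a b c)).symm)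
    fun _ hw _ hw' => ?_
  -- any two edges of the triangle `abc` share an end
  rcases memInterfaceAt_of_mem_openNbhd_ηt hw with ⟨_, _⟩ | ⟨_, _⟩ | ⟨_, _⟩ <;>
  rcases memInterfaceAt_of_mem_openNbhd_ηt hw' with ⟨_, _⟩ | ⟨_, _⟩ | ⟨_, _⟩ <;>
  first
  | exact ⟨a, ‹_›, ‹_›⟩
  | exact ⟨b, ‹_›, ‹_›⟩
  | exact ⟨c, ‹_›, ‹_›⟩

theorem ncard_memInterfaceAt_le_two (hl : IsInducedPathList G l)
    (h0 : D.Peripheral (l.head hl.1)) (hn : D.Peripheral (l.getLast hl.1)) (c : H') :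
    {v | v ∈ l ∧ D.MemInterfaceAt c v}.ncard ≤ 2 := by
  by_contra! h
  obtain ⟨_, _, _, ⟨h₁, hc₁⟩, ⟨h₂, hc₂⟩, ⟨h₃, hc₃⟩, h₁₂, h₁₃, h₂₃⟩ :=
    (Set.two_lt_ncard_iff (l.finite_toSet.subset fun v hv => hv.1)).1 h
  obtain ⟨k₁, hk₁, rfl⟩ := List.getElem_of_mem h₁
  obtain ⟨k₂, hk₂, rfl⟩ := List.getElem_of_mem h₂
  obtain ⟨k₃, hk₃, rfl⟩ := List.getElem_of_mem h₃
  have := hl.le_succ_of_memInterfaceAt h0 hn hk₁ hk₂ hc₁ hc₂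
  have := hl.le_succ_of_memInterfaceAt h0 hn hk₂ hk₁ hc₂ hc₁
  have := hl.le_succ_of_memInterfaceAt h0 hn hk₁ hk₃ hc₁ hc₃
  have := hl.le_succ_of_memInterfaceAt h0 hn hk₃ hk₁ hc₃ hc₁
  have := hl.le_succ_of_memInterfaceAt h0 hn hk₂ hk₃ hc₂ hc₃
  have := hl.le_succ_of_memInterfaceAt h0 hn hk₃ hk₂ hc₃ hc₂
  have : k₁ ≠ k₂ := by rintro rfl; exact h₁₂ rfl
  have : k₁ ≠ k₃ := by rintro rfl; exact h₁₃ rfl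
  have : k₂ ≠ k₃ := by rintro rfl; exact h₂₃ rfl
  omega

end IsInducedPathList

open ESD in
theorem few_neighbors_of_particle_general {V : Type*} {H' : Type*}
    (G : SimpleGraph V) (H : SimpleGraph H') (D : ESD G H)
    (l : List V) (hl : IsInducedPathList G l) (hne : l ≠ [])
    (hx : D.Peripheral (l.head hne)) (hy : D.Peripheral (l.getLast hne))
    (p q : H') (hdisj : ∀ u ∈ l, u ∉ D.ηe p q) :
    Set.ncard {v | v ∈ l ∧ v ∈ closedNbhd G (D.fullEdge p q)} ≤ 4 := by
  have hA : ∀ v ∈ l, v ∉ D.fullEdge p q := by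
    intro v hv h
    rcases mem_fullEdge_iff.1 h with h | h | h | ⟨r, h⟩
    exacts [hl.notMem_ηv hx hy p v hv h, hl.notMem_ηv hx hy q v hv h, hdisj v hv h,
      hl.notMem_ηt hx hy p q r v hv h]
  have hsub : {v | v ∈ l ∧ v ∈ closedNbhd G (D.fullEdge p q)} ⊆
      {v | v ∈ l ∧ D.MemInterfaceAt p v} ∪ {v | v ∈ l ∧ D.MemInterfaceAt q v} := by
    rintro v ⟨hv, hvA | ⟨a, ha, hav⟩⟩
    · exact absurd hvA (hA v hv)
    · exact (memInterfaceAt_of_mem_openNbhd_fullEdge ⟨hA v hv, a, ha, hav⟩).imp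
        (⟨hv, ·⟩) (⟨hv, ·⟩)
  calc _ ≤ _ := Set.ncard_le_ncard hsub ((l.finite_toSet.subset fun v hv => hv.1).union
        (l.finite_toSet.subset fun v hv => hv.1))
    _ ≤ _ := Set.ncard_union_le _ _
    _ ≤ 2 + 2 := add_le_add (hl.ncard_memInterfaceAt_le_two hx hy p)
        (hl.ncard_memInterfaceAt_le_two hx hy q)

/-- an induced path between two distinct peripheral vertices that is
disjoint from `η(pq)` has at most four vertices in the closed neighborhood of the
full edge particle `A_{pq}^{pq}`. -/
theorem few_neighbors_of_particle {V : Type*} {H' : Type*}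
    (G : SimpleGraph V) (H : SimpleGraph H') (D : ESD G H)
    (l : List V) (hl : IsInducedPathList G l) (hne : l ≠ [])
    (hx : D.Peripheral (l.head hne)) (hy : D.Peripheral (l.getLast hne))
    (hxy : l.head hne ≠ l.getLast hne)
    (p q : H') (hpq : H.Adj p q) (hdisj : ∀ u ∈ l, u ∉ D.ηe p q) :
    Set.ncard {v | v ∈ l ∧ v ∈ closedNbhd G (D.fullEdge p q)} ≤ 4 :=
  few_neighbors_of_particle_general G H D l hl hne hx hy p q hdisj
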